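/- Let d ≥ 1, t > 1 and ν₀, ν₁ ∈ P₂(ℝ^d), and let ν_t be the unique minimizer of F_t(ν₀,ν₁;·) over P₂(ℝ^d). Then W₂(ν₀,ν_t) ≤ t·W₂(ν₀,ν₁) and W₂(ν₁,ν_t) ≤ (t−1)·W₂(ν₀,ν₁). -/

import Mathlib

open MeasureTheory
open scoped ENNReal

noncomputable section

abbrev EucSp (d : ℕ) := EuclideanSpace ℝ (Fin d)

/-- `γ` is a coupling of `μ` and `ν`. -/
def IsCoupling {d : ℕ} (γ : Measure (EucSp d × EucSp d)) (μ ν : Measure (EucSp d)) : Prop :=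
  γ.map Prod.fst = μ ∧ γ.map Prod.snd = ν

/-- Probability measures on `ℝ^d` with finite second moment. -/
def P2 (d : ℕ) : Set (Measure (EucSp d)) :=
  {μ | IsProbabilityMeasure μ ∧ Integrable (fun x => ‖x‖ ^ 2) μ}

/-- Squared Wasserstein distance. -/
noncomputable def W2sq {d : ℕ} (μ ν : Measure (EucSp d)) : ℝ :=
  sInf {r | ∃ γ : Measure (EucSp d × EucSp d), IsProbabilityMeasure γ ∧ IsCoupling γ μ ν ∧
      r = ∫ p, ‖p.1 - p.2‖ ^ 2 ∂γ}

/-- Wasserstein distance. -/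
noncomputable def W2 {d : ℕ} (μ ν : Measure (EucSp d)) : ℝ := Real.sqrt (W2sq μ ν)

/-- Metric extrapolation functional. -/
noncomputable def Ft {d : ℕ} (t : ℝ) (ν₀ ν₁ μ : Measure (EucSp d)) : ℝ :=
  W2sq μ ν₁ / (2 * (t - 1)) - W2sq μ ν₀ / (2 * t)

/-- `μ` minimizes the metric extrapolation functional over `P2 d`. -/
def IsExtrapolation {d : ℕ} (t : ℝ) (ν₀ ν₁ μ : Measure (EucSp d)) : Prop :=
  μ ∈ P2 d ∧ ∀ ρ ∈ P2 d, Ft t ν₀ ν₁ μ ≤ Ft t ν₀ ν₁ ρ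

end

noncomputable section Aux

open ProbabilityTheory

variable {d : ℕ}

lemma cost_nonneg {μ ν : Measure (EucSp d)} :
    ∀ r ∈ {r | ∃ γ : Measure (EucSp d × EucSp d), IsProbabilityMeasure γ ∧ IsCoupling γ μ ν ∧
      r = ∫ p, ‖p.1 - p.2‖ ^ 2 ∂γ}, (0:ℝ) ≤ r := by
  rintro r ⟨γ, _, _, rfl⟩
  positivity

lemma W2sq_nonneg (μ ν : Measure (EucSp d)) : 0 ≤ W2sq μ ν :=
  Real.sInf_nonneg cost_nonneg

lemma W2_nonneg (μ ν : Measure (EucSp d)) : 0 ≤ W2 μ ν := Real.sqrt_nonneg _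

lemma W2_sq (μ ν : Measure (EucSp d)) : W2 μ ν ^ 2 = W2sq μ ν :=
  Real.sq_sqrt (W2sq_nonneg μ ν)

lemma W2sq_le_cost {μ ν : Measure (EucSp d)} {γ : Measure (EucSp d × EucSp d)}
    (hγ : IsProbabilityMeasure γ) (hc : IsCoupling γ μ ν) :
    W2sq μ ν ≤ ∫ p, ‖p.1 - p.2‖ ^ 2 ∂γ :=
  csInf_le ⟨0, cost_nonneg⟩ ⟨γ, hγ, hc, rfl⟩

lemma exists_coupling_le (μ ν : Measure (EucSp d)) [IsProbabilityMeasure μ]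
    [IsProbabilityMeasure ν] {ε : ℝ} (hε : 0 < ε) :
    ∃ γ : Measure (EucSp d × EucSp d), IsProbabilityMeasure γ ∧ IsCoupling γ μ ν ∧
      (∫ p, ‖p.1 - p.2‖ ^ 2 ∂γ) < W2sq μ ν + ε := by
  have hne : {r | ∃ γ : Measure (EucSp d × EucSp d), IsProbabilityMeasure γ ∧ IsCoupling γ μ ν ∧
      r = ∫ p, ‖p.1 - p.2‖ ^ 2 ∂γ}.Nonempty :=
    ⟨_, μ.prod ν, by infer_instance, ⟨by simp [Measure.map_fst_prod],
      by simp [Measure.map_snd_prod]⟩, rfl⟩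
  obtain ⟨r, hr, hlt⟩ := Real.lt_sInf_add_pos hne hε
  obtain ⟨γ, hp, hc, rfl⟩ := hr
  exact ⟨γ, hp, hc, hlt⟩

lemma integrable_sq_norm_comp {β : Type*} [MeasurableSpace β] {γ : Measure β}
    {g : β → EucSp d} (hg : Measurable g) {μ : Measure (EucSp d)}
    (h : γ.map g = μ) (hi : Integrable (fun x => ‖x‖ ^ 2) μ) :
    Integrable (fun p => ‖g p‖ ^ 2) γ :=
  (integrable_map_measure ((continuous_norm.pow 2).aestronglyMeasurable) hg.aemeasurable).mp
    (h ▸ hi)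

lemma integrable_cost_aux {β : Type*} [MeasurableSpace β] {γ : Measure β} [IsFiniteMeasure γ]
    {f g : β → EucSp d} (hf : Measurable f) (hg : Measurable g)
    (hif : Integrable (fun p => ‖f p‖ ^ 2) γ) (hig : Integrable (fun p => ‖g p‖ ^ 2) γ) :
    Integrable (fun p => ‖f p - g p‖ ^ 2) γ := by
  have hI : Integrable (fun p => 2 * (‖f p‖ ^ 2 + ‖g p‖ ^ 2)) γ := (hif.add hig).const_mul 2
  refine Integrable.mono' hI ((hf.sub hg).norm.pow_const 2).aestronglyMeasurable ?_
  filter_upwards with p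
  have h1 : ‖f p - g p‖ ≤ ‖f p‖ + ‖g p‖ := norm_sub_le _ _
  rw [Real.norm_eq_abs, abs_of_nonneg (by positivity)]
  nlinarith [norm_nonneg (f p), norm_nonneg (g p), norm_nonneg (f p - g p),
    sq_nonneg (‖f p‖ - ‖g p‖)]

/-- cost integrable under a coupling of P2 measures -/
lemma integrable_cost {μ ν : Measure (EucSp d)} {γ : Measure (EucSp d × EucSp d)}
    [IsFiniteMeasure γ] (hc : IsCoupling γ μ ν)
    (hμ : Integrable (fun x => ‖x‖ ^ 2) μ) (hν : Integrable (fun x => ‖x‖ ^ 2) ν) :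
    Integrable (fun p => ‖p.1 - p.2‖ ^ 2) γ :=
  integrable_cost_aux measurable_fst measurable_snd
    (integrable_sq_norm_comp measurable_fst hc.1 hμ)
    (integrable_sq_norm_comp measurable_snd hc.2 hν)

lemma l2_minkowski {β F : Type*} [MeasurableSpace β] [NormedAddCommGroup F]
    {γ : Measure β} [IsFiniteMeasure γ]
    {f g : β → F} (hf : AEStronglyMeasurable f γ) (hg : AEStronglyMeasurable g γ)
    (hif : Integrable (fun p => ‖f p‖ ^ 2) γ) (hig : Integrable (fun p => ‖g p‖ ^ 2) γ) :
    ∫ p, ‖f p + g p‖ ^ 2 ∂γ ≤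
      (Real.sqrt (∫ p, ‖f p‖ ^ 2 ∂γ) + Real.sqrt (∫ p, ‖g p‖ ^ 2 ∂γ)) ^ 2 := by
  have hcross : Integrable (fun p => ‖f p‖ * ‖g p‖) γ := by
    refine Integrable.mono' (hif.add hig) (hf.norm.mul hg.norm) ?_
    filter_upwards with p
    rw [Real.norm_eq_abs, abs_of_nonneg (by positivity)]
    simp only [Pi.add_apply]
    nlinarith [sq_nonneg (‖f p‖ - ‖g p‖)]
  have hCS : ∫ p, ‖f p‖ * ‖g p‖ ∂γ ≤
      Real.sqrt (∫ p, ‖f p‖ ^ 2 ∂γ) * Real.sqrt (∫ p, ‖g p‖ ^ 2 ∂γ) := by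
    have hpq : Real.HolderConjugate 2 2 := ⟨by norm_num, by norm_num, by norm_num⟩
    have hmf : MemLp (fun p => ‖f p‖) (ENNReal.ofReal 2) γ := by
      rw [show ENNReal.ofReal 2 = 2 by norm_num]
      exact (memLp_two_iff_integrable_sq hf.norm).mpr hif
    have hmg : MemLp (fun p => ‖g p‖) (ENNReal.ofReal 2) γ := by
      rw [show ENNReal.ofReal 2 = 2 by norm_num]
      exact (memLp_two_iff_integrable_sq hg.norm).mpr hig
    have h := integral_mul_le_Lp_mul_Lq_of_nonneg hpq
      (Filter.Eventually.of_forall fun p => norm_nonneg (f p))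
      (Filter.Eventually.of_forall fun p => norm_nonneg (g p)) hmf hmg
    calc ∫ p, ‖f p‖ * ‖g p‖ ∂γ
        ≤ (∫ p, ‖f p‖ ^ (2:ℝ) ∂γ) ^ ((1:ℝ)/2) * (∫ p, ‖g p‖ ^ (2:ℝ) ∂γ) ^ ((1:ℝ)/2) := h
      _ = Real.sqrt (∫ p, ‖f p‖ ^ 2 ∂γ) * Real.sqrt (∫ p, ‖g p‖ ^ 2 ∂γ) := by
          rw [Real.sqrt_eq_rpow, Real.sqrt_eq_rpow]
          norm_num [Real.rpow_two]
  have hdom : ∫ p, ‖f p + g p‖ ^ 2 ∂γ ≤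
      ∫ p, ‖f p‖ ^ 2 + 2 * (‖f p‖ * ‖g p‖) + ‖g p‖ ^ 2 ∂γ := by
    refine integral_mono_of_nonneg (Filter.Eventually.of_forall fun p => by positivity)
      (by
        have i2 : Integrable (fun p => 2 * (‖f p‖ * ‖g p‖)) γ := hcross.const_mul 2
        exact (hif.add i2).add hig) ?_
    filter_upwards with p
    have h1 : ‖f p + g p‖ ≤ ‖f p‖ + ‖g p‖ := norm_add_le _ _
    nlinarith [norm_nonneg (f p + g p), norm_nonneg (f p), norm_nonneg (g p)]
  have hsplit : ∫ p, ‖f p‖ ^ 2 + 2 * (‖f p‖ * ‖g p‖) + ‖g p‖ ^ 2 ∂γ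
      = (∫ p, ‖f p‖ ^ 2 ∂γ) + 2 * (∫ p, ‖f p‖ * ‖g p‖ ∂γ) + ∫ p, ‖g p‖ ^ 2 ∂γ := by
    have i2 : Integrable (fun p => 2 * (‖f p‖ * ‖g p‖)) γ := hcross.const_mul 2
    have i1 : Integrable (fun p => ‖f p‖ ^ 2 + 2 * (‖f p‖ * ‖g p‖)) γ := hif.add i2
    rw [integral_add i1 hig, integral_add hif i2, integral_const_mul]
  have hA : Real.sqrt (∫ p, ‖f p‖ ^ 2 ∂γ) ^ 2 = ∫ p, ‖f p‖ ^ 2 ∂γ :=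
    Real.sq_sqrt (integral_nonneg fun p => by positivity)
  have hB : Real.sqrt (∫ p, ‖g p‖ ^ 2 ∂γ) ^ 2 = ∫ p, ‖g p‖ ^ 2 ∂γ :=
    Real.sq_sqrt (integral_nonneg fun p => by positivity)
  nlinarith [hdom, hsplit, hCS, Real.sqrt_nonneg (∫ p, ‖f p‖ ^ 2 ∂γ),
    Real.sqrt_nonneg (∫ p, ‖g p‖ ^ 2 ∂γ)]

lemma map_compProd_prod_fst {X Y Z : Type*} [MeasurableSpace X] [MeasurableSpace Y]
    [MeasurableSpace Z] (ν : Measure Y) [SFinite ν] (κ : Kernel Y X) (η : Kernel Y Z)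
    [IsMarkovKernel κ] [IsMarkovKernel η] :
    (ν ⊗ₘ (κ ×ₖ η)).map (fun p => (p.1, p.2.1)) = ν ⊗ₘ κ := by
  ext s hs
  rw [Measure.map_apply (by fun_prop) hs,
    Measure.compProd_apply (hs.preimage (by fun_prop)), Measure.compProd_apply hs]
  refine lintegral_congr fun y => ?_
  have hset : (Prod.mk y ⁻¹' ((fun p : Y × (X × Z) => (p.1, p.2.1)) ⁻¹' s))
      = {p : X × Z | p.1 ∈ Prod.mk y ⁻¹' s} := rfl
  rw [hset, ← Kernel.fst_apply' _ _ (hs.preimage measurable_prodMk_left), Kernel.fst_prod]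

lemma map_compProd_prod_snd {X Y Z : Type*} [MeasurableSpace X] [MeasurableSpace Y]
    [MeasurableSpace Z] (ν : Measure Y) [SFinite ν] (κ : Kernel Y X) (η : Kernel Y Z)
    [IsMarkovKernel κ] [IsMarkovKernel η] :
    (ν ⊗ₘ (κ ×ₖ η)).map (fun p => (p.1, p.2.2)) = ν ⊗ₘ η := by
  ext s hs
  rw [Measure.map_apply (by fun_prop) hs,
    Measure.compProd_apply (hs.preimage (by fun_prop)), Measure.compProd_apply hs]
  refine lintegral_congr fun y => ?_
  have hset : (Prod.mk y ⁻¹' ((fun p : Y × (X × Z) => (p.1, p.2.2)) ⁻¹' s))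
      = {p : X × Z | p.2 ∈ Prod.mk y ⁻¹' s} := rfl
  rw [hset, show {p : X × Z | p.2 ∈ Prod.mk y ⁻¹' s} = Prod.snd ⁻¹' (Prod.mk y ⁻¹' s) from rfl,
    ← Kernel.snd_apply' _ _ (hs.preimage measurable_prodMk_left), Kernel.snd_prod]

set_option maxHeartbeats 1000000 in
lemma glue {μ ν ρ : Measure (EucSp d)} {γ₁ γ₂ : Measure (EucSp d × EucSp d)}
    [IsProbabilityMeasure γ₁] [IsProbabilityMeasure γ₂]
    (h1 : IsCoupling γ₁ μ ν) (h2 : IsCoupling γ₂ ν ρ)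
    (hi1 : Integrable (fun p => ‖p.1 - p.2‖ ^ 2) γ₁)
    (hi2 : Integrable (fun p => ‖p.1 - p.2‖ ^ 2) γ₂) :
    ∃ γ : Measure (EucSp d × EucSp d), IsProbabilityMeasure γ ∧ IsCoupling γ μ ρ ∧
      ∫ p, ‖p.1 - p.2‖ ^ 2 ∂γ ≤
        (Real.sqrt (∫ p, ‖p.1 - p.2‖ ^ 2 ∂γ₁) + Real.sqrt (∫ p, ‖p.1 - p.2‖ ^ 2 ∂γ₂)) ^ 2 := by
  classical
  set γ₁' : Measure (EucSp d × EucSp d) := γ₁.map Prod.swap with hγ₁'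
  haveI : IsProbabilityMeasure γ₁' := Measure.isProbabilityMeasure_map measurable_swap.aemeasurable
  have hfst1 : γ₁'.fst = ν := by
    rw [Measure.fst, hγ₁', Measure.map_map measurable_fst measurable_swap]
    exact h1.2
  have hfst2 : γ₂.fst = ν := h2.1
  set π : Measure (EucSp d × (EucSp d × EucSp d)) :=
    ν ⊗ₘ (γ₁'.condKernel ×ₖ γ₂.condKernel) with hπ
  haveI hνp : IsProbabilityMeasure ν := h1.2 ▸ Measure.isProbabilityMeasure_map
    measurable_snd.aemeasurable
  haveI : IsProbabilityMeasure π := by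
    constructor
    rw [hπ, Measure.compProd_apply_univ]
    exact measure_univ
  have m1 : π.map (fun p => (p.1, p.2.1)) = γ₁' := by
    rw [hπ, map_compProd_prod_fst, ← hfst1, Measure.disintegrate γ₁' γ₁'.condKernel]
  have m2 : π.map (fun p => (p.1, p.2.2)) = γ₂ := by
    rw [hπ, map_compProd_prod_snd, ← hfst2, Measure.disintegrate γ₂ γ₂.condKernel]
  refine ⟨π.map (fun p => (p.2.1, p.2.2)), Measure.isProbabilityMeasure_map (by fun_prop), ⟨?_, ?_⟩, ?_⟩
  · rw [Measure.map_map measurable_fst (by fun_prop)]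
    have e1 : (Prod.fst ∘ fun p : EucSp d × (EucSp d × EucSp d) => (p.2.1, p.2.2))
        = (Prod.snd ∘ fun p : EucSp d × (EucSp d × EucSp d) => (p.1, p.2.1)) := rfl
    rw [e1, ← Measure.map_map measurable_snd (by fun_prop), m1, hγ₁',
      Measure.map_map measurable_snd measurable_swap]
    exact h1.1
  · rw [Measure.map_map measurable_snd (by fun_prop)]
    have e2 : (Prod.snd ∘ fun p : EucSp d × (EucSp d × EucSp d) => (p.2.1, p.2.2))
        = (Prod.snd ∘ fun p : EucSp d × (EucSp d × EucSp d) => (p.1, p.2.2)) := rfl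
    rw [e2, ← Measure.map_map measurable_snd (by fun_prop), m2]
    exact h2.2
  · have hcont : Continuous (fun p : EucSp d × EucSp d => ‖p.1 - p.2‖ ^ 2) := by fun_prop
    have hcost : ∫ p, ‖p.1 - p.2‖ ^ 2 ∂(π.map (fun p => (p.2.1, p.2.2)))
        = ∫ q, ‖q.2.1 - q.2.2‖ ^ 2 ∂π := by
      rw [integral_map (by fun_prop) hcont.aestronglyMeasurable]
    have hf2 : ∫ q, ‖q.2.1 - q.1‖ ^ 2 ∂π = ∫ p, ‖p.1 - p.2‖ ^ 2 ∂γ₁ := by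
      have e : ∫ q, ‖q.2.1 - q.1‖ ^ 2 ∂π = ∫ r, ‖r.2 - r.1‖ ^ 2 ∂γ₁' := by
        rw [← m1, integral_map (by fun_prop)
          (by exact (Continuous.pow (by fun_prop) 2).aestronglyMeasurable)]
      rw [e, hγ₁', integral_map measurable_swap.aemeasurable
        (by exact (Continuous.pow (by fun_prop) 2).aestronglyMeasurable)]
      simp [Prod.swap]
    have hg2 : ∫ q, ‖q.1 - q.2.2‖ ^ 2 ∂π = ∫ p, ‖p.1 - p.2‖ ^ 2 ∂γ₂ := by
      rw [← m2, integral_map (by fun_prop) hcont.aestronglyMeasurable]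
    have hfi : Integrable (fun q : EucSp d × (EucSp d × EucSp d) => ‖q.2.1 - q.1‖ ^ 2) π := by
      have h1' : Integrable (fun r : EucSp d × EucSp d => ‖r.2 - r.1‖ ^ 2) γ₁' := by
        rw [hγ₁']
        exact (integrable_map_measure
          (by exact (Continuous.pow (by fun_prop) 2).aestronglyMeasurable)
          measurable_swap.aemeasurable).mpr hi1
      rw [← m1] at h1'
      exact (integrable_map_measure
        (by exact (Continuous.pow (by fun_prop) 2).aestronglyMeasurable)
        (by fun_prop)).mp h1'
    have hgi : Integrable (fun q : EucSp d × (EucSp d × EucSp d) => ‖q.1 - q.2.2‖ ^ 2) π := by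
      have h2' := hi2
      rw [← m2] at h2'
      exact (integrable_map_measure
        (by exact (Continuous.pow (by fun_prop) 2).aestronglyMeasurable)
        (by fun_prop)).mp h2'
    have hmink := l2_minkowski (γ := π)
      (f := fun q : EucSp d × (EucSp d × EucSp d) => q.2.1 - q.1)
      (g := fun q : EucSp d × (EucSp d × EucSp d) => q.1 - q.2.2)
      (by exact (Continuous.sub (by fun_prop) (by fun_prop)).aestronglyMeasurable)
      (by exact (Continuous.sub (by fun_prop) (by fun_prop)).aestronglyMeasurable) hfi hgi
    simp only [sub_add_sub_cancel] at hmink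
    rw [hcost, ← hf2, ← hg2]
    exact hmink

end Aux

noncomputable section Aux2
open ProbabilityTheory
variable {d : ℕ}

lemma cost_set_subset (μ ν : Measure (EucSp d)) :
    {r | ∃ γ : Measure (EucSp d × EucSp d), IsProbabilityMeasure γ ∧ IsCoupling γ μ ν ∧
      r = ∫ p, ‖p.1 - p.2‖ ^ 2 ∂γ} ⊆
    {r | ∃ γ : Measure (EucSp d × EucSp d), IsProbabilityMeasure γ ∧ IsCoupling γ ν μ ∧
      r = ∫ p, ‖p.1 - p.2‖ ^ 2 ∂γ} := by
  rintro r ⟨γ, hγp, ⟨hf, hs⟩, rfl⟩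
  refine ⟨γ.map Prod.swap, Measure.isProbabilityMeasure_map measurable_swap.aemeasurable, ⟨?_, ?_⟩, ?_⟩
  · rw [Measure.map_map measurable_fst measurable_swap]; exact hs
  · rw [Measure.map_map measurable_snd measurable_swap]; exact hf
  · rw [integral_map measurable_swap.aemeasurable
      (by exact (Continuous.pow (by fun_prop) 2).aestronglyMeasurable)]
    refine integral_congr_ae (Filter.Eventually.of_forall fun p => ?_)
    simp [Prod.swap, norm_sub_rev]

lemma W2sq_comm (μ ν : Measure (EucSp d)) : W2sq μ ν = W2sq ν μ := by
  unfold W2sq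
  exact congrArg sInf (Set.Subset.antisymm (cost_set_subset μ ν) (cost_set_subset ν μ))

lemma W2_comm (μ ν : Measure (EucSp d)) : W2 μ ν = W2 ν μ := by
  unfold W2; rw [W2sq_comm]

lemma nonneg_of_forall_pos {f : ℝ → ℝ} (hf : Continuous f) (h : ∀ ε > 0, 0 ≤ f ε) :
    0 ≤ f 0 := by
  refine ge_of_tendsto ((hf.tendsto 0).mono_left
    (nhdsWithin_le_nhds : nhdsWithin (0:ℝ) (Set.Ioi 0) ≤ nhds 0)) ?_
  filter_upwards [self_mem_nhdsWithin] with ε hε using h ε hε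

lemma W2_triangle {μ ν ρ : Measure (EucSp d)} (hμ : μ ∈ P2 d) (hν : ν ∈ P2 d) (hρ : ρ ∈ P2 d) :
    W2 μ ρ ≤ W2 μ ν + W2 ν ρ := by
  haveI := hμ.1; haveI := hν.1; haveI := hρ.1
  have key : ∀ ε > 0, W2 μ ρ ≤ Real.sqrt (W2sq μ ν + ε) + Real.sqrt (W2sq ν ρ + ε) := by
    intro ε hε
    obtain ⟨γ₁, p1, c1, hc1⟩ := exists_coupling_le μ ν hε
    obtain ⟨γ₂, p2, c2, hc2⟩ := exists_coupling_le ν ρ hε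
    haveI := p1; haveI := p2
    obtain ⟨γ, pγ, cγ, hcost⟩ := glue c1 c2 (integrable_cost c1 hμ.2 hν.2)
      (integrable_cost c2 hν.2 hρ.2)
    have h0 : W2sq μ ρ ≤ ∫ p, ‖p.1 - p.2‖ ^ 2 ∂γ := W2sq_le_cost pγ cγ
    have s1 : (0:ℝ) ≤ ∫ p, ‖p.1 - p.2‖ ^ 2 ∂γ₁ := integral_nonneg fun p => by positivity
    have s2 : (0:ℝ) ≤ ∫ p, ‖p.1 - p.2‖ ^ 2 ∂γ₂ := integral_nonneg fun p => by positivity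
    calc W2 μ ρ = Real.sqrt (W2sq μ ρ) := rfl
      _ ≤ Real.sqrt ((Real.sqrt (∫ p, ‖p.1 - p.2‖ ^ 2 ∂γ₁)
            + Real.sqrt (∫ p, ‖p.1 - p.2‖ ^ 2 ∂γ₂)) ^ 2) :=
          Real.sqrt_le_sqrt (h0.trans hcost)
      _ = Real.sqrt (∫ p, ‖p.1 - p.2‖ ^ 2 ∂γ₁) + Real.sqrt (∫ p, ‖p.1 - p.2‖ ^ 2 ∂γ₂) :=
          Real.sqrt_sq (by positivity)
      _ ≤ Real.sqrt (W2sq μ ν + ε) + Real.sqrt (W2sq ν ρ + ε) :=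
          add_le_add (Real.sqrt_le_sqrt hc1.le) (Real.sqrt_le_sqrt hc2.le)
  have hcont : Continuous fun ε : ℝ =>
      Real.sqrt (W2sq μ ν + ε) + Real.sqrt (W2sq ν ρ + ε) - W2 μ ρ := by
    have h1 : Continuous fun ε : ℝ => Real.sqrt (W2sq μ ν + ε) :=
      Real.continuous_sqrt.comp (continuous_const.add continuous_id)
    have h2 : Continuous fun ε : ℝ => Real.sqrt (W2sq ν ρ + ε) :=
      Real.continuous_sqrt.comp (continuous_const.add continuous_id)
    exact (h1.add h2).sub continuous_const
  have h0 := nonneg_of_forall_pos hcont (fun ε hε => by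
    have := key ε hε; simp only [sub_nonneg]; linarith)
  simp only [add_zero, sub_nonneg] at h0
  exact le_trans h0 (by rw [W2, W2])

lemma geodesic {νa νb : Measure (EucSp d)} (ha : νa ∈ P2 d) (hb : νb ∈ P2 d)
    {γ : Measure (EucSp d × EucSp d)} [IsProbabilityMeasure γ] (hc : IsCoupling γ νa νb)
    {s : ℝ} (hs0 : 0 ≤ s) (hs1 : s ≤ 1) :
    ∃ μs ∈ P2 d, W2sq νa μs ≤ s ^ 2 * ∫ p, ‖p.1 - p.2‖ ^ 2 ∂γ ∧
      W2sq μs νb ≤ (1 - s) ^ 2 * ∫ p, ‖p.1 - p.2‖ ^ 2 ∂γ := by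
  haveI := ha.1; haveI := hb.1
  set m : EucSp d × EucSp d → EucSp d := fun p => p.1 + s • (p.2 - p.1) with hm
  have hmc : Continuous m := by fun_prop
  have ia : Integrable (fun p => ‖p.1‖ ^ 2) γ := integrable_sq_norm_comp measurable_fst hc.1 ha.2
  have ib : Integrable (fun p => ‖p.2‖ ^ 2) γ := integrable_sq_norm_comp measurable_snd hc.2 hb.2
  have im : Integrable (fun p => ‖m p‖ ^ 2) γ := by
    refine Integrable.mono' ((ia.const_mul 8).add (ib.const_mul 2))
      ((hmc.norm.pow 2).aestronglyMeasurable) ?_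
    filter_upwards with p
    have h1 : ‖m p‖ ≤ ‖p.1‖ + s * ‖p.2 - p.1‖ := by
      calc ‖m p‖ ≤ ‖p.1‖ + ‖s • (p.2 - p.1)‖ := norm_add_le _ _
        _ = ‖p.1‖ + s * ‖p.2 - p.1‖ := by rw [norm_smul, Real.norm_eq_abs, abs_of_nonneg hs0]
    have h2 : ‖p.2 - p.1‖ ≤ ‖p.2‖ + ‖p.1‖ := norm_sub_le _ _
    have h3 : ‖m p‖ ≤ 2 * ‖p.1‖ + ‖p.2‖ := by nlinarith [norm_nonneg (p.2 - p.1)]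
    rw [Real.norm_eq_abs, abs_of_nonneg (by positivity)]
    simp only [Pi.add_apply]
    nlinarith [norm_nonneg (m p), norm_nonneg p.1, norm_nonneg p.2,
      sq_nonneg (2 * ‖p.1‖ - ‖p.2‖)]
  refine ⟨γ.map m, ⟨Measure.isProbabilityMeasure_map hmc.measurable.aemeasurable,
    (integrable_map_measure ((continuous_norm.pow 2).aestronglyMeasurable)
      hmc.measurable.aemeasurable).mpr im⟩, ?_, ?_⟩
  · have hcoup : IsCoupling (γ.map (fun p => (p.1, m p))) νa (γ.map m) := by
      constructor
      · rw [Measure.map_map measurable_fst (by fun_prop)]; exact hc.1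
      · rw [Measure.map_map measurable_snd (by fun_prop)]
        have e0 : (Prod.snd ∘ fun p : EucSp d × EucSp d => (p.1, m p)) = m := rfl
        rw [e0]
    refine le_trans (W2sq_le_cost (Measure.isProbabilityMeasure_map (by fun_prop)) hcoup) ?_
    rw [integral_map (by fun_prop)
      (by exact (Continuous.pow (by fun_prop) 2).aestronglyMeasurable)]
    have e : ∀ p : EucSp d × EucSp d, ‖p.1 - m p‖ ^ 2 = s ^ 2 * ‖p.1 - p.2‖ ^ 2 := by
      intro p
      have : p.1 - m p = s • (p.1 - p.2) := by rw [hm]; module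
      rw [this, norm_smul, Real.norm_eq_abs, abs_of_nonneg hs0, mul_pow]
    calc ∫ p, ‖p.1 - m p‖ ^ 2 ∂γ = ∫ p, s ^ 2 * ‖p.1 - p.2‖ ^ 2 ∂γ := by
          exact integral_congr_ae (Filter.Eventually.of_forall fun p => e p)
      _ = s ^ 2 * ∫ p, ‖p.1 - p.2‖ ^ 2 ∂γ := integral_const_mul _ _
      _ ≤ s ^ 2 * ∫ p, ‖p.1 - p.2‖ ^ 2 ∂γ := le_rfl
  · have hcoup : IsCoupling (γ.map (fun p => (m p, p.2))) (γ.map m) νb := by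
      constructor
      · rw [Measure.map_map measurable_fst (by fun_prop)]
        have e0 : (Prod.fst ∘ fun p : EucSp d × EucSp d => (m p, p.2)) = m := rfl
        rw [e0]
      · rw [Measure.map_map measurable_snd (by fun_prop)]; exact hc.2
    refine le_trans (W2sq_le_cost (Measure.isProbabilityMeasure_map (by fun_prop)) hcoup) ?_
    rw [integral_map (by fun_prop)
      (by exact (Continuous.pow (by fun_prop) 2).aestronglyMeasurable)]
    have e : ∀ p : EucSp d × EucSp d, ‖m p - p.2‖ ^ 2 = (1 - s) ^ 2 * ‖p.1 - p.2‖ ^ 2 := by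
      intro p
      have : m p - p.2 = (1 - s) • (p.1 - p.2) := by rw [hm]; module
      rw [this, norm_smul, Real.norm_eq_abs, abs_of_nonneg (by linarith), mul_pow]
    calc ∫ p, ‖m p - p.2‖ ^ 2 ∂γ = ∫ p, (1 - s) ^ 2 * ‖p.1 - p.2‖ ^ 2 ∂γ := by
          exact integral_congr_ae (Filter.Eventually.of_forall fun p => e p)
      _ = (1 - s) ^ 2 * ∫ p, ‖p.1 - p.2‖ ^ 2 ∂γ := integral_const_mul _ _
      _ ≤ (1 - s) ^ 2 * ∫ p, ‖p.1 - p.2‖ ^ 2 ∂γ := le_rfl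

lemma div_clear {P Q x y x' y' : ℝ} (hP : 0 < P) (hQ : 0 < Q)
    (h : x / P - y / Q ≤ x' / P - y' / Q) : Q * x - P * y ≤ Q * x' - P * y' := by
  rw [div_sub_div _ _ hP.ne' hQ.ne', div_sub_div _ _ hP.ne' hQ.ne',
    div_le_div_iff₀ (mul_pos hP hQ) (mul_pos hP hQ)] at h
  have := le_of_mul_le_mul_right h (mul_pos hP hQ)
  linarith

end Aux2

set_option maxHeartbeats 1000000 in
/-- distance bounds for the metric extrapolation. -/
theorem stmt_4 {d : ℕ} (hd : 1 ≤ d) {t : ℝ} (ht : 1 < t)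
    (ν₀ ν₁ νt : Measure (EucSp d)) (h₀ : ν₀ ∈ P2 d) (h₁ : ν₁ ∈ P2 d)
    (hmin : IsExtrapolation t ν₀ ν₁ νt)
    (huniq : ∀ μ : Measure (EucSp d), IsExtrapolation t ν₀ ν₁ μ → μ = νt) :
    W2 ν₀ νt ≤ t * W2 ν₀ ν₁ ∧ W2 ν₁ νt ≤ (t - 1) * W2 ν₀ ν₁ := by
  obtain ⟨hνt, hminle⟩ := hmin
  haveI hp0 : IsProbabilityMeasure ν₀ := h₀.1
  haveI hp1 : IsProbabilityMeasure ν₁ := h₁.1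
  haveI hpt : IsProbabilityMeasure νt := hνt.1
  have ht1 : (0:ℝ) < t - 1 := by linarith
  have ht0 : (0:ℝ) < t := by linarith
  set a := W2 νt ν₁ with hadef
  set b := W2 νt ν₀ with hbdef
  set c := W2 ν₀ ν₁ with hcdef
  have ha0 : 0 ≤ a := Real.sqrt_nonneg _
  have hb0 : 0 ≤ b := Real.sqrt_nonneg _
  have hc0 : 0 ≤ c := Real.sqrt_nonneg _
  have hA : W2sq νt ν₁ = a ^ 2 := (W2_sq _ _).symm
  have hB : W2sq νt ν₀ = b ^ 2 := (W2_sq _ _).symm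
  have hsqrtA : Real.sqrt (W2sq νt ν₁) = a := rfl
  set A := W2sq νt ν₁ with hAdef
  have hA0 : 0 ≤ A := W2sq_nonneg _ _
  -- Key step 1 : t * a² ≤ (t-1) * (b * a)
  have key1 : t * a ^ 2 ≤ (t - 1) * (b * a) := by
    have hstep : ∀ s : ℝ, 0 < s → s < 1 →
        t * ((2 * s - s ^ 2) * A) ≤ (t - 1) * (2 * b * s * Real.sqrt A) := by
      intro s hs0 hs1
      have heps : ∀ ε : ℝ, 0 < ε →
          t * ((2 * s - s ^ 2) * A - ε) ≤ (t - 1) * (2 * b * s * Real.sqrt (A + ε)) := by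
        intro ε hε
        obtain ⟨γ, hγp, hγc, hγlt⟩ := exists_coupling_le νt ν₁ hε
        haveI := hγp
        set r := ∫ p, ‖p.1 - p.2‖ ^ 2 ∂γ with hr
        have hrA : A ≤ r := W2sq_le_cost hγp hγc
        have hr0 : 0 ≤ r := le_trans hA0 hrA
        obtain ⟨μs, hμsP2, hg1, hg2⟩ := geodesic hνt h₁ hγc hs0.le hs1.le
        have hFt := hminle μs hμsP2
        rw [Ft, Ft] at hFt
        have hcl := div_clear (mul_pos (by norm_num) ht1) (mul_pos (by norm_num) ht0) hFt
        -- triangle lower bound on W2sq μs ν₀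
        have hX0 : 0 ≤ W2 μs ν₀ := Real.sqrt_nonneg _
        have htr : b ≤ W2 νt μs + W2 μs ν₀ := W2_triangle hνt hμsP2 h₀
        have hsm : W2 νt μs ≤ s * Real.sqrt r := by
          calc W2 νt μs = Real.sqrt (W2sq νt μs) := rfl
            _ ≤ Real.sqrt (s ^ 2 * r) := Real.sqrt_le_sqrt hg1
            _ = s * Real.sqrt r := by rw [Real.sqrt_mul (sq_nonneg s), Real.sqrt_sq hs0.le]
        have hBlow : b ^ 2 - 2 * b * (s * Real.sqrt r) ≤ W2sq μs ν₀ := by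
          have hXsq : W2 μs ν₀ ^ 2 = W2sq μs ν₀ := W2_sq _ _
          have hp : 0 ≤ W2 μs ν₀ - (b - s * Real.sqrt r) := by linarith
          nlinarith [sq_nonneg (b - W2 μs ν₀), mul_nonneg hb0 hp, hXsq, hX0]
        have hsr : Real.sqrt r ≤ Real.sqrt (A + ε) := Real.sqrt_le_sqrt hγlt.le
        have hsrn : 0 ≤ Real.sqrt r := Real.sqrt_nonneg r
        have m1 : 2 * t * W2sq μs ν₁ ≤ 2 * t * ((1 - s) ^ 2 * r) :=
          mul_le_mul_of_nonneg_left hg2 (by positivity)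
        have m2 : 2 * (t - 1) * (b ^ 2 - 2 * b * (s * Real.sqrt r))
            ≤ 2 * (t - 1) * W2sq μs ν₀ := mul_le_mul_of_nonneg_left hBlow (by positivity)
        have m3 : 2 * t * ((2 * s - s ^ 2) * A) ≤ 2 * t * ((2 * s - s ^ 2) * r) := by
          have hss : 0 ≤ 2 * s - s ^ 2 := by nlinarith
          have := mul_le_mul_of_nonneg_left hrA hss
          nlinarith [this]
        have m4 : 2 * t * r ≤ 2 * t * (A + ε) :=
          mul_le_mul_of_nonneg_left hγlt.le (by positivity)
        have m5 : 2 * (t - 1) * (2 * b * s * Real.sqrt r)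
            ≤ 2 * (t - 1) * (2 * b * s * Real.sqrt (A + ε)) := by
          have hcoef : 0 ≤ 2 * (t - 1) * (2 * b * s) := by positivity
          nlinarith [mul_le_mul_of_nonneg_left hsr hcoef]
        -- hcl : 2*t * W2sq νt ν₁ - 2*(t-1) * W2sq νt ν₀ ≤ 2*t * W2sq μs ν₁ - 2*(t-1) * W2sq μs ν₀
        rw [← hAdef, hB] at hcl
        nlinarith [hcl, m1, m2, m3, m4, m5]
      -- take ε → 0
      have hcont : Continuous fun ε : ℝ =>
          (t - 1) * (2 * b * s * Real.sqrt (A + ε)) - t * ((2 * s - s ^ 2) * A - ε) := by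
        have h1 : Continuous fun ε : ℝ => Real.sqrt (A + ε) :=
          Real.continuous_sqrt.comp (continuous_const.add continuous_id)
        fun_prop
      have h0 := nonneg_of_forall_pos hcont (fun ε hε => by
        have := heps ε hε; simp only [sub_nonneg]; linarith)
      simp only [add_zero, sub_zero, sub_nonneg] at h0
      linarith
    -- divide by s and take s → 0
    have hdiv : ∀ s : ℝ, 0 < s → s < 1 →
        t * ((2 - s) * A) ≤ (t - 1) * (2 * b * Real.sqrt A) := by
      intro s hs0 hs1
      have h' := hstep s hs0 hs1
      have h'' : s * (t * ((2 - s) * A)) ≤ s * ((t - 1) * (2 * b * Real.sqrt A)) := by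
        nlinarith [h']
      exact le_of_mul_le_mul_left h'' hs0
    have hcont : Continuous fun s : ℝ =>
        (t - 1) * (2 * b * Real.sqrt A) - t * ((2 - min s (1/2)) * A) := by
      have h1 : Continuous fun s : ℝ => min s (1/2 : ℝ) := continuous_id.min continuous_const
      fun_prop
    have h0 := nonneg_of_forall_pos hcont (fun s hs => by
      have hm1 : 0 < min s (1/2 : ℝ) := lt_min hs (by norm_num)
      have hm2 : min s (1/2 : ℝ) < 1 := lt_of_le_of_lt (min_le_right _ _) (by norm_num)
      have := hdiv _ hm1 hm2
      simp only [sub_nonneg]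
      linarith)
    have hmin0 : min (0:ℝ) (1/2 : ℝ) = 0 := min_eq_left (by norm_num)
    rw [hmin0] at h0
    simp only [sub_zero, sub_nonneg] at h0
    -- h0 : t * ((2 - 0) * A) ≤ (t-1) * (2 * b * √A)
    rw [hsqrtA, hA] at h0
    nlinarith [h0]
  -- Key step 2 : triangle
  have key2 : b ≤ a + c := by
    have h := W2_triangle hνt h₁ h₀
    rw [W2_comm ν₁ ν₀] at h
    exact h
  -- conclude
  rw [W2_comm ν₀ νt, W2_comm ν₁ νt, ← hbdef, ← hadef]
  rcases eq_or_lt_of_le ha0 with haz | hap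
  · constructor
    · nlinarith [key2]
    · rw [← haz]; positivity
  · have hkey : t * a ≤ (t - 1) * b := by
      have h' : (t * a) * a ≤ ((t - 1) * b) * a := by nlinarith [key1]
      exact le_of_mul_le_mul_right h' hap
    constructor
    · nlinarith [hkey, key2]
    · nlinarith [hkey, key2]
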